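/- There exists an n-qubit product state whose stabilizer rank is exactly 2^n: it cannot be written as a ℂ-linear combination of fewer than 2^n stabilizer states. -/

import Mathlib

/-!
All amplitudes of all stabilizer states lie in a countable subfield `K` of `ℂ`, since there are
countably many stabilizer states. Pick `a` transcendental over `K` and take the product state
with factors proportional to `(1, a ^ 2 ^ i)`; its amplitude at `x` is `c * a ^ N x`, where `N x`
is the number with binary digits `x`. Fewer than `2 ^ n` vectors with entries in `K` are
annihilated by some nonzero `u : K ^ (2 ^ n)`, and pairing `u` with the product state gives a
nonzero polynomial over `K` evaluated at `a`, which cannot vanish.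
-/

/-- An `n`-qubit product state: a tensor product of single-qubit unit vectors. -/
def IsProductState (n : ℕ) (v : EuclideanSpace ℂ (Fin n → Fin 2)) : Prop :=
  ∃ w : Fin n → EuclideanSpace ℂ (Fin 2),
    (∀ i, ‖w i‖ = 1) ∧ ∀ x : Fin n → Fin 2, v x = ∏ i : Fin n, w i (x i)

/-- Apply a single-qubit gate `M` to qubit `i` of an `n`-qubit state. -/
noncomputable def applyGate1 (n : ℕ) (i : Fin n) (M : Matrix (Fin 2) (Fin 2) ℂ)
    (ψ : EuclideanSpace ℂ (Fin n → Fin 2)) : EuclideanSpace ℂ (Fin n → Fin 2) :=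
  WithLp.toLp 2 (fun x => ∑ b : Fin 2, M (x i) b * ψ (Function.update x i b))

/-- Apply a CNOT gate with control `i` and target `j`. -/
noncomputable def applyCX (n : ℕ) (i j : Fin n)
    (ψ : EuclideanSpace ℂ (Fin n → Fin 2)) : EuclideanSpace ℂ (Fin n → Fin 2) :=
  WithLp.toLp 2 (fun x => ψ (Function.update x j (x i + x j)))

/-- The phase gate `S`. -/
noncomputable def sMat : Matrix (Fin 2) (Fin 2) ℂ := !![1, 0; 0, Complex.I]

/-- The Hadamard gate `H`. -/
noncomputable def hMat : Matrix (Fin 2) (Fin 2) ℂ :=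
  !![(Real.sqrt 2 : ℂ)⁻¹, (Real.sqrt 2 : ℂ)⁻¹;
     (Real.sqrt 2 : ℂ)⁻¹, -(Real.sqrt 2 : ℂ)⁻¹]

/-- The basis state `|0^n⟩`. -/
noncomputable def zeroState (n : ℕ) : EuclideanSpace ℂ (Fin n → Fin 2) :=
  WithLp.toLp 2 (fun x => if x = fun _ => 0 then 1 else 0)

/-- The `n`-qubit stabilizer states: the orbit of `|0^n⟩` under the Clifford
group generated by `S`, `H` and `CX` gates. -/
inductive IsStab (n : ℕ) : EuclideanSpace ℂ (Fin n → Fin 2) → Prop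
  | zero : IsStab n (zeroState n)
  | sgate (i : Fin n) {v} : IsStab n v → IsStab n (applyGate1 n i sMat v)
  | hgate (i : Fin n) {v} : IsStab n v → IsStab n (applyGate1 n i hMat v)
  | cx (i j : Fin n) {v} : IsStab n v → IsStab n (applyCX n i j v)

open Polynomial

theorem exists_transcendental_of_countable (R A : Type*) [CommRing R] [IsDomain R] [Countable R]
    [CommRing A] [IsDomain A] [Algebra R A] [Module.IsTorsionFree R A] [Uncountable A] :
    ∃ a : A, Transcendental R a := by
  by_contra! h
  exact Set.not_countable_univ ((Algebraic.countable R A).mono fun a _ => not_not.1 (h a))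

theorem Subfield.countable_closure {K : Type*} [DivisionRing K] {s : Set K} (hs : s.Countable) :
    Countable (Subfield.closure s) := by
  rw [← Cardinal.mk_le_aleph0_iff]
  exact (cardinalMk_closure_le_max s).trans (max_le hs.le_aleph0 le_rfl)

section

variable {K L ι : Type*} [Field K] [Field L] [Algebra K L] [Fintype ι]

theorem exists_ne_zero_forall_sum_mul_eq_zero {k : ℕ} (hk : k < Fintype.card ι)
    (s : Fin k → ι → K) : ∃ u : ι → K, u ≠ 0 ∧ ∀ i, ∑ x, u x * s i x = 0 := by
  have hdep : ¬ LinearIndependent K fun x i => s i x := fun h =>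
    lt_irrefl _ (h.fintype_card_le_finrank.trans_lt (by simpa using hk))
  obtain ⟨u, hu, x, hx⟩ := Fintype.not_linearIndependent_iff.1 hdep
  exact ⟨u, fun h => hx (congrFun h x), fun i => by simpa using congrFun hu i⟩

theorem Transcendental.sum_algebraMap_mul_pow_ne_zero {a : L} (ha : Transcendental K a)
    {N : ι → ℕ} (hN : N.Injective) {u : ι → K} (hu : u ≠ 0) :
    ∑ x, algebraMap K L (u x) * a ^ N x ≠ 0 := by
  classical
  obtain ⟨x₀, hx₀⟩ := Function.ne_iff.1 hu
  have hp : ∑ x, C (u x) * X ^ N x ≠ 0 := fun h => hx₀ <| by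
    simpa [finsetSum_coeff, coeff_C_mul_X_pow, hN.eq_iff] using congrArg (coeff · (N x₀)) h
  simpa [aeval_def, eval₂_finsetSum] using mt (transcendental_iff.1 ha _) hp

theorem Transcendental.not_forall_mul_pow_eq_sum_mul {a : L} (ha : Transcendental K a)
    {N : ι → ℕ} (hN : N.Injective) {c : L} (hc : c ≠ 0) {k : ℕ} (hk : k < Fintype.card ι)
    (s : Fin k → ι → L) (hs : ∀ i x, s i x ∈ (algebraMap K L).range) (α : Fin k → L) :
    ¬ ∀ x, c * a ^ N x = ∑ i, α i * s i x := by
  intro h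
  choose S hS using hs
  obtain ⟨u, hu, hus⟩ := exists_ne_zero_forall_sum_mul_eq_zero hk S
  apply mul_ne_zero hc (ha.sum_algebraMap_mul_pow_ne_zero hN hu)
  calc c * ∑ x, algebraMap K L (u x) * a ^ N x
      = ∑ x, algebraMap K L (u x) * (c * a ^ N x) := by
        rw [Finset.mul_sum]
        exact Finset.sum_congr rfl fun x _ => by ring
    _ = ∑ x, algebraMap K L (u x) * ∑ i, α i * s i x := by simp only [h]
    _ = ∑ i, α i * algebraMap K L (∑ x, u x * S i x) := by
        simp only [map_sum, map_mul, hS, Finset.mul_sum]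
        rw [Finset.sum_comm]
        exact Finset.sum_congr rfl fun i _ => Finset.sum_congr rfl fun x _ => by ring
    _ = 0 := by simp [hus]

end

noncomputable def stabGate (n : ℕ) :
    (Fin n × Bool) ⊕ (Fin n × Fin n) → EuclideanSpace ℂ (Fin n → Fin 2) →
      EuclideanSpace ℂ (Fin n → Fin 2)
  | .inl (i, true) => applyGate1 n i sMat
  | .inl (i, false) => applyGate1 n i hMat
  | .inr (i, j) => applyCX n i j

theorem IsStab.mem_range_foldr_stabGate {n : ℕ} {v : EuclideanSpace ℂ (Fin n → Fin 2)}
    (hv : IsStab n v) : v ∈ Set.range fun l : List _ => l.foldr (stabGate n) (zeroState n) := by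
  induction hv with
  | zero => exact ⟨[], rfl⟩
  | sgate i _ ih => obtain ⟨l, rfl⟩ := ih; exact ⟨.inl (i, true) :: l, rfl⟩
  | hgate i _ ih => obtain ⟨l, rfl⟩ := ih; exact ⟨.inl (i, false) :: l, rfl⟩
  | cx i j _ ih => obtain ⟨l, rfl⟩ := ih; exact ⟨.inr (i, j) :: l, rfl⟩

theorem countable_setOf_isStab (n : ℕ) : {v | IsStab n v}.Countable :=
  (Set.countable_range _).mono fun _ => IsStab.mem_range_foldr_stabGate

theorem exists_countable_subfield_isStab_apply_mem (n : ℕ) :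
    ∃ K : Subfield ℂ, Countable K ∧ ∀ v, IsStab n v → ∀ x, v x ∈ K :=
  ⟨_, Subfield.countable_closure <|
      (countable_setOf_isStab n).biUnion fun v _ => Set.countable_range (WithLp.ofLp v),
    fun _ hv x => Subfield.subset_closure <| Set.mem_biUnion hv ⟨x, rfl⟩⟩

theorem isProductState_prod_inv_norm_mul_prod {n : ℕ} {w : Fin n → EuclideanSpace ℂ (Fin 2)}
    (hw : ∀ i, w i ≠ 0) :
    IsProductState n (WithLp.toLp 2 fun x => (∏ i, (‖w i‖⁻¹ : ℂ)) * ∏ i, w i (x i)) :=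
  ⟨fun i => (‖w i‖⁻¹ : ℂ) • w i, fun i => norm_smul_inv_norm (hw i),
    fun x => by simp [Finset.prod_mul_distrib]⟩

theorem stmt_19 (n : ℕ) :
    ∃ v : EuclideanSpace ℂ (Fin n → Fin 2), IsProductState n v ∧
      ¬ ∃ (k : ℕ) (_ : k < 2 ^ n) (s : Fin k → EuclideanSpace ℂ (Fin n → Fin 2))
          (α : Fin k → ℂ), (∀ i, IsStab n (s i)) ∧ v = ∑ i, α i • s i := by
  obtain ⟨K, hK, hKstab⟩ := exists_countable_subfield_isStab_apply_mem n
  have : Uncountable ℂ := Set.not_countable_univ_iff.1 not_countable_complex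
  obtain ⟨a, ha⟩ := exists_transcendental_of_countable K ℂ
  let w : Fin n → EuclideanSpace ℂ (Fin 2) :=
    fun i => WithLp.toLp 2 fun b => a ^ ((b : ℕ) * 2 ^ (i : ℕ))
  have hw : ∀ i, w i ≠ 0 := fun i h => one_ne_zero (α := ℂ) (by simpa [w] using congr($h 0))
  have hwx : ∀ x, ∏ i, w i (x i) = a ^ (finFunctionFinEquiv x : ℕ) := fun x => by
    simp [w, Finset.prod_pow_eq_pow_sum]
  have hc : ∏ i, (‖w i‖⁻¹ : ℂ) ≠ 0 := Finset.prod_ne_zero_iff.2 fun i _ => by simpa using hw i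
  refine ⟨_, isProductState_prod_inv_norm_mul_prod hw, ?_⟩
  rintro ⟨k, hk, s, α, hs, hv⟩
  refine ha.not_forall_mul_pow_eq_sum_mul (Fin.val_injective.comp finFunctionFinEquiv.injective)
    hc (by simpa using hk) (fun i x => s i x)
    (fun i x => ⟨⟨s i x, hKstab _ (hs i) x⟩, rfl⟩) α fun x => ?_
  simpa [hwx] using congr($hv x)
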